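/- Let φ : [0,∞) → [0,∞) be continuous, increasing and subadditive with φ(0) = 0 and linear growth with constant ν > 0 (φ(x) ≤ ν(x+1) for all x ≥ 0), let μ > 0, and let g : ℝ × ℝ^d → ℝ satisfy |g(y₁, z₁) − g(y₂, z₂)| ≤ μ|y₁ − y₂| + φ(‖z₁ − z₂‖) for all (y₁, z₁), (y₂, z₂), together with g(0, 0) = 0. For m > max(μ, ν) let g̲_m(y, z) := inf{ g(a, b) + m(|y − a| + ‖z − b‖) : (a, b) ∈ ℚ × ℚ^d } and ḡ_m(y, z) := sup{ g(a, b) − m(|y − a| + ‖z − b‖) : (a, b) ∈ ℚ × ℚ^d }. Then for every m > max(μ, ν) and every (y, z) ∈ ℝ × ℝ^d: |g̲_m(y, z)| ≤ max(μ, ν)(1 + |y| + ‖z‖) and |ḡ_m(y, z)| ≤ max(μ, ν)(1 + |y| + ‖z‖). -/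

import Mathlib

/-! From `g(0,0) = 0` and the modulus of continuity, `|g(a,b)| ≤ (μ ∨ ν)(1 + |a| + ‖b‖)`. Since
`m ≥ μ ∨ ν`, the triangle inequality bounds every term of the infimum defining `g̲_m(y,z)` below
by `-(μ ∨ ν)(1 + |y| + ‖z‖)`, while rational points `(a,b)` close to `(y,z)` give terms at most
`(μ ∨ ν)(1 + |y| + ‖z‖) + ε`. The bound for `ḡ_m` follows because `ḡ_m` for `g` is `-g̲_m`
for `-g`. -/

/-- A vector in `ℝ^d` with the given rational coordinates. -/
noncomputable def ratVec (d : ℕ) (b : Fin d → ℚ) : EuclideanSpace ℝ (Fin d) :=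
  WithLp.toLp 2 (fun i => (b i : ℝ))

/-- The Lepeltier–San Martin lower approximation `g̲_m` (equation (2.1) of the paper). -/
noncomputable def lowerApprox (d : ℕ) (g : ℝ → EuclideanSpace ℝ (Fin d) → ℝ) (m : ℝ)
    (y : ℝ) (z : EuclideanSpace ℝ (Fin d)) : ℝ :=
  sInf {r : ℝ | ∃ (a : ℚ) (b : Fin d → ℚ),
    r = g (a : ℝ) (ratVec d b) + m * (|y - (a : ℝ)| + ‖z - ratVec d b‖)}

/-- The Lepeltier–San Martin upper approximation `ḡ_m` (equation (2.2) of the paper). -/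
noncomputable def upperApprox (d : ℕ) (g : ℝ → EuclideanSpace ℝ (Fin d) → ℝ) (m : ℝ)
    (y : ℝ) (z : EuclideanSpace ℝ (Fin d)) : ℝ :=
  sSup {r : ℝ | ∃ (a : ℚ) (b : Fin d → ℚ),
    r = g (a : ℝ) (ratVec d b) - m * (|y - (a : ℝ)| + ‖z - ratVec d b‖)}

theorem denseRange_ratVec (d : ℕ) : DenseRange (ratVec d) :=
  (WithLp.toLp_surjective 2).denseRange.comp
    (DenseRange.piMap fun _ => Rat.denseRange_cast) (PiLp.continuous_toLp 2 _)

theorem abs_le_max_mul_one_add_of_abs_sub_le {E : Type*} [SeminormedAddCommGroup E]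
    {μ ν : ℝ} {φ : ℝ → ℝ} (hφ_growth : ∀ x, 0 ≤ x → φ x ≤ ν * (x + 1))
    {g : ℝ → E → ℝ} (hg : ∀ y₁ y₂ z₁ z₂, |g y₁ z₁ - g y₂ z₂| ≤ μ * |y₁ - y₂| + φ ‖z₁ - z₂‖)
    (hg0 : g 0 0 = 0) (y : ℝ) (z : E) :
    |g y z| ≤ max μ ν * (1 + |y| + ‖z‖) := by
  have hyz := hg y 0 z 0
  rw [hg0, sub_zero, sub_zero, sub_zero] at hyz
  calc |g y z| ≤ μ * |y| + ν * (‖z‖ + 1) :=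
        hyz.trans (by gcongr; exact hφ_growth _ (norm_nonneg z))
    _ ≤ max μ ν * |y| + max μ ν * (‖z‖ + 1) := by gcongr <;> simp
    _ = max μ ν * (1 + |y| + ‖z‖) := by ring

theorem upperApprox_eq_neg_lowerApprox_neg (d : ℕ) (g : ℝ → EuclideanSpace ℝ (Fin d) → ℝ)
    (m y : ℝ) (z : EuclideanSpace ℝ (Fin d)) :
    upperApprox d g m y z = -lowerApprox d (-g) m y z := by
  rw [upperApprox, lowerApprox, ← Real.sSup_neg]
  congr 1
  ext r
  simp only [Set.mem_ofPred_eq, Set.mem_neg, Pi.neg_apply, neg_eq_iff_eq_neg, neg_add, neg_neg,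
    sub_eq_add_neg]

theorem abs_le_mul_one_add_add_dist {E : Type*} [SeminormedAddCommGroup E] {M x a y : ℝ}
    {b z : E} (hM : 0 ≤ M) (hx : |x| ≤ M * (1 + |a| + ‖b‖)) :
    |x| ≤ M * (1 + |y| + ‖z‖) + M * (|y - a| + ‖z - b‖) := by
  have ha : |a| ≤ |y| + |y - a| := by
    simpa only [Real.norm_eq_abs] using norm_le_norm_add_norm_sub y a
  have hb : ‖b‖ ≤ ‖z‖ + ‖z - b‖ := norm_le_norm_add_norm_sub z b
  calc |x| ≤ M * (1 + |a| + ‖b‖) := hx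
    _ ≤ M * (1 + (|y| + |y - a|) + (‖z‖ + ‖z - b‖)) := by gcongr
    _ = _ := by ring

theorem abs_lowerApprox_le {d : ℕ} {g : ℝ → EuclideanSpace ℝ (Fin d) → ℝ} {M m : ℝ}
    (hMm : M ≤ m) (hg : ∀ a b, |g a b| ≤ M * (1 + |a| + ‖b‖)) (y : ℝ)
    (z : EuclideanSpace ℝ (Fin d)) :
    |lowerApprox d g m y z| ≤ M * (1 + |y| + ‖z‖) := by
  have hM : 0 ≤ M := by simpa using (abs_nonneg _).trans (hg 0 0)
  set B := M * (1 + |y| + ‖z‖)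
  have hshift : ∀ (a : ℝ) b, |g a b| ≤ B + M * (|y - a| + ‖z - b‖) := fun a b =>
    abs_le_mul_one_add_add_dist hM (hg a b)
  set S := {r : ℝ | ∃ (a : ℚ) (b : Fin d → ℚ),
    r = g (a : ℝ) (ratVec d b) + m * (|y - (a : ℝ)| + ‖z - ratVec d b‖)}
  have hS : ∀ r ∈ S, -B ≤ r := by
    rintro r ⟨a, b, rfl⟩
    have := neg_le_of_abs_le (hshift a (ratVec d b))
    have : M * (|y - a| + ‖z - ratVec d b‖) ≤ m * (|y - a| + ‖z - ratVec d b‖) := by gcongr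
    linarith
  refine abs_le.2 ⟨le_csInf ⟨_, 0, 0, rfl⟩ hS, le_of_forall_pos_lt_add fun ε hε => ?_⟩
  obtain ⟨⟨a, b⟩, hab⟩ :=
    ((Rat.denseRange_cast (𝕜 := ℝ)).prodMap (denseRange_ratVec d)).exists_mem_open
    (isOpen_lt (by fun_prop) continuous_const :
      IsOpen {p : ℝ × EuclideanSpace ℝ (Fin d) | (M + m) * (|y - p.1| + ‖z - p.2‖) < ε})
    ⟨(y, z), by simpa using hε⟩
  simp only [Set.mem_ofPred_eq, Prod.map_fst, Prod.map_snd] at hab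
  calc lowerApprox d g m y z ≤ g a (ratVec d b) + m * (|y - a| + ‖z - ratVec d b‖) :=
        csInf_le ⟨-B, hS⟩ ⟨a, b, rfl⟩
    _ ≤ B + (M + m) * (|y - a| + ‖z - ratVec d b‖) := by
        linarith [le_of_abs_le (hshift a (ratVec d b))]
    _ < B + ε := by linarith

theorem stmt_4_general (d : ℕ) (μ ν : ℝ)
    (φ : ℝ → ℝ)
    (hφ_growth : ∀ x, 0 ≤ x → φ x ≤ ν * (x + 1))
    (g : ℝ → EuclideanSpace ℝ (Fin d) → ℝ)
    (hg : ∀ (y₁ y₂ : ℝ) (z₁ z₂ : EuclideanSpace ℝ (Fin d)),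
      |g y₁ z₁ - g y₂ z₂| ≤ μ * |y₁ - y₂| + φ ‖z₁ - z₂‖)
    (hg0 : g 0 0 = 0) :
    ∀ m, max μ ν < m → ∀ (y : ℝ) (z : EuclideanSpace ℝ (Fin d)),
      |lowerApprox d g m y z| ≤ max μ ν * (1 + |y| + ‖z‖) ∧
      |upperApprox d g m y z| ≤ max μ ν * (1 + |y| + ‖z‖) := by
  intro m hm y z
  have hgrowth := abs_le_max_mul_one_add_of_abs_sub_le hφ_growth hg hg0
  refine ⟨abs_lowerApprox_le hm.le hgrowth y z, ?_⟩
  rw [upperApprox_eq_neg_lowerApprox_neg, abs_neg]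
  exact abs_lowerApprox_le hm.le (fun a b => by simpa using hgrowth a b) y z

/-- If moreover `g(0,0) = 0`, then the approximations `g̲_m` and `ḡ_m`
have linear growth in `(y, z)` with constant `μ ∨ ν`:
`|g̲_m(y,z)| ≤ (μ ∨ ν)(1 + |y| + ‖z‖)` and `|ḡ_m(y,z)| ≤ (μ ∨ ν)(1 + |y| + ‖z‖)`. -/
theorem stmt_4 (d : ℕ) (hd : 1 ≤ d) (μ ν : ℝ) (hμ : 0 < μ) (hν : 0 < ν)
    (φ : ℝ → ℝ)
    (hφ_cont : ContinuousOn φ (Set.Ici 0))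
    (hφ_nonneg : ∀ x, 0 ≤ x → 0 ≤ φ x)
    (hφ_mono : ∀ a b, 0 ≤ a → a ≤ b → φ a ≤ φ b)
    (hφ_subadd : ∀ a b, 0 ≤ a → 0 ≤ b → φ (a + b) ≤ φ a + φ b)
    (hφ0 : φ 0 = 0)
    (hφ_growth : ∀ x, 0 ≤ x → φ x ≤ ν * (x + 1))
    (g : ℝ → EuclideanSpace ℝ (Fin d) → ℝ)
    (hg : ∀ (y₁ y₂ : ℝ) (z₁ z₂ : EuclideanSpace ℝ (Fin d)),
      |g y₁ z₁ - g y₂ z₂| ≤ μ * |y₁ - y₂| + φ ‖z₁ - z₂‖)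
    (hg0 : g 0 0 = 0) :
    ∀ m, max μ ν < m → ∀ (y : ℝ) (z : EuclideanSpace ℝ (Fin d)),
      |lowerApprox d g m y z| ≤ max μ ν * (1 + |y| + ‖z‖) ∧
      |upperApprox d g m y z| ≤ max μ ν * (1 + |y| + ‖z‖) :=
  stmt_4_general d μ ν φ hφ_growth g hg hg0
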